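/- Let G = (V, E) be a finite simple undirected graph and let k : V → ℕ satisfy 1 ≤ k(u) ≤ 1 + deg(u) for every u ∈ V. Define ν : 2^V → ℝ by ν(C) = |{u ∈ V : u ∈ C or |N(u) ∩ C| ≥ k(u)}| (so ν(∅) = 0 since every k(u) ≥ 1). Then for every v ∈ V, the Shapley value of v in the game (V, ν) equals k(v)/(1 + deg(v)) + Σ_{u ∈ N(v)} (1 + deg(u) − k(u)) / (deg(u)·(1 + deg(u))). -/

import Mathlib

/-!
The game `ν` is the sum over `u` of the indicator games `[u ∈ C ∨ k u ≤ |N(u) ∩ C|]`, and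
the Shapley value is additive. The marginal contribution of `v` to the game of `u` vanishes unless
`u = v` or `u ∈ N(v)`, and otherwise depends only on the trace of the coalition on
`N(v)`, resp. on `N[u] ∖ {v}`. Shapley weights are consistent under adding dummy players
(`w_{s+1}(c) + w_{s+1}(c+1) = w_s(c)`), so each value can be computed in that small subgame:
`v` is pivotal for itself iff fewer than `k v` of its `deg v` neighbours precede it, which has
probability `k v / (1 + deg v)`; it is pivotal for a neighbour `u` iff `u` has not joined yet and
exactly `k u - 1` of the other `deg u - 1` neighbours of `u` have.
-/

open Finset

/-- The Shapley value of player `i` in the coalitional game with characteristic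
function `ν` on the finite player set `α`. -/
noncomputable def shapley {α : Type*} [Fintype α] [DecidableEq α]
    (ν : Finset α → ℝ) (i : α) : ℝ :=
  ∑ C ∈ (Finset.univ.erase i).powerset,
    ((C.card.factorial * (Fintype.card α - C.card - 1).factorial : ℝ) /
        ((Fintype.card α).factorial : ℝ)) * (ν (insert i C) - ν C)

open scoped Nat

/-- The Shapley weight of a coalition of size `c` when there are `s + 1` players. -/
noncomputable def shapleyWeight (s c : ℕ) : ℝ := (c ! * (s - c)! : ℝ) / (s + 1)!

/-- Adding a dummy player splits each weight between the coalitions without and with it. -/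
lemma shapleyWeight_succ_add_shapleyWeight_succ {s c : ℕ} (h : c ≤ s) :
    shapleyWeight (s + 1) c + shapleyWeight (s + 1) (c + 1) = shapleyWeight s c := by
  unfold shapleyWeight
  rw [show s + 1 - c = s - c + 1 by omega, show s + 1 - (c + 1) = s - c by omega]
  simp only [Nat.factorial_succ]
  push_cast [Nat.cast_sub h]
  field_simp
  ring

lemma choose_mul_shapleyWeight {s c : ℕ} (h : c ≤ s) :
    (s.choose c : ℝ) * shapleyWeight s c = 1 / (s + 1) := by
  have hfact : (s.choose c * c ! * (s - c)! : ℝ) = s ! := by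
    exact_mod_cast Nat.choose_mul_factorial_mul_factorial h
  unfold shapleyWeight
  rw [Nat.factorial_succ]
  push_cast
  field_simp
  linear_combination hfact

lemma choose_pred_mul_shapleyWeight {d j : ℕ} (hd : 0 < d) (hj : j ≤ d) :
    ((d - 1).choose j : ℝ) * shapleyWeight d j = (d - j) / (d * (d + 1)) := by
  have hchoose : ((d - 1).choose j * d : ℝ) = d.choose j * (d - j) := by
    have h := Nat.choose_mul_succ_eq (d - 1) j
    rw [Nat.sub_add_cancel hd] at h
    rw [← Nat.cast_sub hj]
    exact_mod_cast h
  have hd' : (d : ℝ) ≠ 0 := by positivity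
  calc ((d - 1).choose j : ℝ) * shapleyWeight d j
      = ((d - 1).choose j * d : ℝ) * shapleyWeight d j / d := by field_simp
    _ = (d - j) * ((d.choose j : ℝ) * shapleyWeight d j) / d := by rw [hchoose]; ring
    _ = (d - j) / (d * (d + 1)) := by rw [choose_mul_shapleyWeight hj]; field_simp

section Shapley

variable {α : Type*} [DecidableEq α]

lemma sum_powerset_shapleyWeight_mul_inter {A T : Finset α} (hAT : Disjoint A T)
    (f : Finset α → ℝ) :
    ∑ C ∈ (A ∪ T).powerset, shapleyWeight #(A ∪ T) #C * f (C ∩ A)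
      = ∑ B ∈ A.powerset, shapleyWeight #A #B * f B := by
  induction T using Finset.induction_on with
  | empty =>
    refine sum_congr (by rw [union_empty]) fun C hC => ?_
    rw [union_empty, inter_eq_left.2 (mem_powerset.1 hC)]
  | insert x T hxT ih =>
    have hxA : x ∉ A := disjoint_right.1 hAT (mem_insert_self x T)
    have hxAT : x ∉ A ∪ T := by simp [hxA, hxT]
    rw [union_insert, sum_powerset_insert hxAT, card_insert_of_notMem hxAT,
      ← ih (disjoint_of_subset_right (subset_insert x T) hAT), ← sum_add_distrib]
    refine sum_congr rfl fun C hC => ?_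
    have hCAT := mem_powerset.1 hC
    rw [insert_inter_of_notMem hxA, card_insert_of_notMem fun hxC => hxAT (hCAT hxC),
      ← add_mul, shapleyWeight_succ_add_shapleyWeight_succ (card_le_card hCAT)]

variable [Fintype α]

lemma shapley_eq_sum_shapleyWeight (ν : Finset α → ℝ) (i : α) :
    shapley ν i = ∑ C ∈ (univ.erase i).powerset,
      shapleyWeight (Fintype.card α - 1) #C * (ν (insert i C) - ν C) := by
  have hcard : Fintype.card α = Fintype.card α - 1 + 1 :=
    (Nat.sub_add_cancel (Fintype.card_pos_iff.2 ⟨i⟩)).symm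
  refine sum_congr rfl fun C _ => ?_
  rw [shapleyWeight, Nat.sub_right_comm, ← hcard]

lemma shapley_eq_sum_powerset_of_marginal {ν : Finset α → ℝ} {i : α} {A : Finset α}
    (hiA : i ∉ A) (δ : Finset α → ℝ) (hδ : ∀ C, i ∉ C → ν (insert i C) - ν C = δ (C ∩ A)) :
    shapley ν i = ∑ B ∈ A.powerset, shapleyWeight #A #B * δ B := by
  have hA : A ⊆ univ.erase i := fun a ha =>
    mem_erase.2 ⟨ne_of_mem_of_not_mem ha hiA, mem_univ a⟩
  have hunion : A ∪ (univ.erase i \ A) = univ.erase i := union_sdiff_of_subset hA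
  rw [shapley_eq_sum_shapleyWeight, ← sum_powerset_shapleyWeight_mul_inter disjoint_sdiff,
    hunion, card_erase_of_mem (mem_univ i), card_univ]
  exact sum_congr rfl fun C hC => by
    rw [hδ C fun hiC => notMem_erase i univ (mem_powerset.1 hC hiC)]

lemma shapley_eq_zero_of_null {ν : Finset α → ℝ} {i : α} (h : ∀ C, ν (insert i C) = ν C) :
    shapley ν i = 0 :=
  sum_eq_zero fun C _ => by rw [h, sub_self, mul_zero]

lemma shapley_sum {ι : Type*} (s : Finset ι) (ν : ι → Finset α → ℝ) (i : α) :
    shapley (fun C => ∑ u ∈ s, ν u C) i = ∑ u ∈ s, shapley (ν u) i := by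
  unfold shapley
  rw [sum_comm]
  exact sum_congr rfl fun C _ => by rw [← sum_sub_distrib, mul_sum]

end Shapley

namespace SimpleGraph

variable {V : Type*} [Fintype V] [DecidableEq V] (G : SimpleGraph V) [DecidableRel G.Adj]
  (k : V → ℕ)

noncomputable def influenceIndicator (u : V) (C : Finset V) : ℝ :=
  if u ∈ C ∨ k u ≤ #(G.neighborFinset u ∩ C) then 1 else 0

lemma shapley_influenceIndicator_of_not_adj {u v : V} (huv : u ≠ v) (hadj : ¬G.Adj u v) :
    shapley (G.influenceIndicator k u) v = 0 := by
  refine shapley_eq_zero_of_null fun C => ?_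
  have hvN : v ∉ G.neighborFinset u := by rwa [mem_neighborFinset]
  simp only [influenceIndicator, mem_insert, huv, false_or, inter_insert_of_notMem hvN]

lemma shapley_influenceIndicator_self {v : V} (hk : k v ≤ 1 + G.degree v) :
    shapley (G.influenceIndicator k v) v = k v / (1 + G.degree v) := by
  have hmarginal : ∀ C, v ∉ C →
      G.influenceIndicator k v (insert v C) - G.influenceIndicator k v C
        = if #(C ∩ G.neighborFinset v) < k v then 1 else 0 := by
    intro C hvC
    simp only [influenceIndicator, mem_insert_self, true_or, if_true, hvC, false_or,
      inter_comm C]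
    split_ifs <;> first | omega | norm_num
  rw [shapley_eq_sum_powerset_of_marginal (G.notMem_neighborFinset_self v)
    (fun B => if #B < k v then 1 else 0) hmarginal,
    sum_powerset_apply_card
      (fun j => shapleyWeight #(G.neighborFinset v) j * if j < k v then 1 else 0),
    card_neighborFinset_eq_degree]
  have hterm : ∀ j ∈ range (G.degree v + 1),
      (G.degree v).choose j • (shapleyWeight (G.degree v) j * if j < k v then 1 else 0)
        = 1 / (1 + G.degree v) * if j < k v then 1 else 0 := by
    intro j hj
    rw [nsmul_eq_mul, ← mul_assoc,
      choose_mul_shapleyWeight (Nat.lt_succ_iff.1 (mem_range.1 hj)), add_comm (1 : ℝ)]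
  have hfilter : {j ∈ range (G.degree v + 1) | j < k v} = range (k v) := by
    ext j; simp only [mem_filter, mem_range]; omega
  rw [sum_congr rfl hterm, ← mul_sum, sum_boole, hfilter, card_range]
  ring

lemma shapley_influenceIndicator_of_adj {u v : V} (hadj : G.Adj u v)
    (hk₁ : 1 ≤ k u) (hk₂ : k u ≤ 1 + G.degree u) :
    shapley (G.influenceIndicator k u) v
      = (1 + G.degree u - k u) / (G.degree u * (1 + G.degree u)) := by
  obtain ⟨j, hj⟩ : ∃ j, k u = j + 1 := ⟨k u - 1, by omega⟩
  set A₀ := (G.neighborFinset u).erase v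
  have hvN : v ∈ G.neighborFinset u := (G.mem_neighborFinset u v).2 hadj
  have huA₀ : u ∉ A₀ := fun h => G.notMem_neighborFinset_self u (mem_of_mem_erase h)
  have hvA : v ∉ insert u A₀ := by simp [A₀, hadj.ne.symm]
  have hmarginal : ∀ C, v ∉ C →
      G.influenceIndicator k u (insert v C) - G.influenceIndicator k u C
        = if u ∉ C ∩ insert u A₀ ∧ #(C ∩ insert u A₀) = j then 1 else 0 := by
    intro C hvC
    by_cases huC : u ∈ C
    · simp [influenceIndicator, huC]
    have hCA : C ∩ insert u A₀ = G.neighborFinset u ∩ C := by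
      ext x; simp only [A₀, mem_inter, mem_insert, mem_erase]
      constructor
      · rintro ⟨hxC, rfl | ⟨-, hxN⟩⟩
        exacts [absurd hxC huC, ⟨hxN, hxC⟩]
      · rintro ⟨hxN, hxC⟩
        exact ⟨hxC, Or.inr ⟨ne_of_mem_of_not_mem hxC hvC, hxN⟩⟩
    have hcard : #(G.neighborFinset u ∩ insert v C) = #(G.neighborFinset u ∩ C) + 1 := by
      rw [inter_insert_of_mem hvN, card_insert_of_notMem fun h => hvC (mem_inter.1 h).2]
    simp only [influenceIndicator, mem_insert, hadj.ne, huC, or_false, false_or, hcard, hCA,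
      mem_inter, and_false, not_false_eq_true, true_and]
    split_ifs <;> first | omega | norm_num
  have hA₀ : #A₀ = G.degree u - 1 := by
    rw [card_erase_of_mem hvN, card_neighborFinset_eq_degree]
  have hdeg : 0 < G.degree u := G.degree_pos_iff_exists_adj u |>.2 ⟨v, hadj⟩
  have hA : #(insert u A₀) = G.degree u := by
    rw [card_insert_of_notMem huA₀, hA₀]
    omega
  have hterm : ∀ B ∈ A₀.powerset,
      shapleyWeight (G.degree u) #B * (if u ∉ B ∧ #B = j then 1 else 0)
        = if #B = j then shapleyWeight (G.degree u) j else 0 := fun B hB => by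
    have huB : u ∉ B := fun h => huA₀ (mem_powerset.1 hB h)
    split_ifs <;> simp_all
  rw [shapley_eq_sum_powerset_of_marginal hvA
    (fun B => if u ∉ B ∧ #B = j then 1 else 0) hmarginal, sum_powerset_insert huA₀, hA]
  simp only [mem_insert_self, not_true_eq_false, false_and, if_false, mul_zero, sum_const_zero,
    add_zero]
  rw [sum_congr rfl hterm, ← sum_filter, ← powersetCard_eq_filter, sum_const, card_powersetCard,
    hA₀, nsmul_eq_mul, choose_pred_mul_shapleyWeight hdeg (by omega), hj]
  push_cast
  ring

end SimpleGraph

/-- For node-dependent thresholds `k : V → ℕ` with `1 ≤ k u ≤ 1 + deg u`, the Shapley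
value of `v` in the game where `ν(C)` counts nodes in `C` or with at least `k(u)`
neighbours in `C` equals
`k(v)/(1+deg v) + Σ_{u ∈ N(v)} (1 + deg u − k(u))/(deg u·(1+deg u))`. -/
theorem shapley_k_influence_game_varying {V : Type*} [Fintype V] [DecidableEq V]
    (G : SimpleGraph V) [DecidableRel G.Adj] (k : V → ℕ)
    (hk : ∀ u : V, 1 ≤ k u ∧ k u ≤ 1 + G.degree u)
    (ν : Finset V → ℝ)
    (hν : ∀ C : Finset V,
      ν C = ((Finset.univ.filter
        (fun u => u ∈ C ∨ k u ≤ (G.neighborFinset u ∩ C).card)).card : ℝ))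
    (v : V) :
    shapley ν v
      = (k v : ℝ) / (1 + (G.degree v : ℝ))
        + ∑ u ∈ G.neighborFinset v,
            (1 + (G.degree u : ℝ) - (k u : ℝ))
              / ((G.degree u : ℝ) * (1 + (G.degree u : ℝ))) := by
  have hν_sum : ν = fun C => ∑ u, G.influenceIndicator k u C := funext fun C => by
    rw [hν, card_filter]
    push_cast
    rfl
  have hN : G.neighborFinset v ⊆ univ.erase v := fun u hu =>
    mem_erase.2 ⟨(G.ne_of_adj ((G.mem_neighborFinset v u).1 hu)).symm, mem_univ u⟩
  rw [hν_sum, shapley_sum, ← add_sum_erase _ _ (mem_univ v),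
    G.shapley_influenceIndicator_self k (hk v).2, ← sum_subset hN]
  · exact congrArg _ <| sum_congr rfl fun u hu =>
      G.shapley_influenceIndicator_of_adj k ((G.mem_neighborFinset v u).1 hu).symm
        (hk u).1 (hk u).2
  · intro u hu hvu
    exact G.shapley_influenceIndicator_of_not_adj k (mem_erase.1 hu).1
      fun hadj => hvu ((G.mem_neighborFinset v u).2 hadj.symm)
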